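/- arXiv:1002.3347 — 5 statements merged into one kernel-verified Lean document; each statement's English description precedes it below -/
import Mathlib

section
/- Let m ≥ 1 be an integer, t₁,…,t_m, u₀, x real numbers, cₖ := (2k)!/(2^{2k}(k!)²), and define t := −Σ_{j=1}^{m} tⱼ·cⱼ·u₀^{2j}, B₀ := Σ_{j=1}^{m} tⱼ·Σ_{k=0}^{j−1} x^{2(j−k)−1}·cₖ·u₀^{2k+1}, C₀ := Σ_{j=1}^{m} tⱼ·(x^{2j} + Σ_{k=1}^{j} x^{2(j−k)}·cₖ·u₀^{2k}), and S := Σ_{j=1}^{m} tⱼ·Σ_{k=0}^{j−1} cₖ·x^{2(j−k)−1}·u₀^{2k}. Then B₀² − (C₀ + t)² = (u₀² − x²)·S². In other words, the spectral curve y² = (B₀ + C₀ + t)(B₀ − C₀ − t) of the Lax pair of the (2m,1) minimal model equals y² = (u₀² − x²)·(Σ_{j=1}^{m} tⱼ Σ_{k=0}^{j−1} cₖ x^{2(j−k)−1} u₀^{2k})². -/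
/-- The normalized central binomial coefficient cₖ = (2k)!/(2^{2k}(k!)²). -/
noncomputable def cGD (k : ℕ) : ℝ :=
  (Nat.factorial (2 * k) : ℝ) / (2 ^ (2 * k) * (Nat.factorial k : ℝ) ^ 2)

lemma cGD_zero : cGD 0 = 1 := by simp [cGD]

lemma inner_identity (u₀ x : ℝ) (n : ℕ) :
    x ^ (2 * (n + 1)) + ∑ k ∈ Finset.Icc 1 (n + 1),
        x ^ (2 * (n + 1 - k)) * cGD k * u₀ ^ (2 * k)
      = cGD (n + 1) * u₀ ^ (2 * (n + 1))
        + x * ∑ k ∈ Finset.range (n + 1), cGD k * x ^ (2 * (n + 1 - k) - 1) * u₀ ^ (2 * k) := by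
  rw [Finset.sum_Icc_succ_top (by omega : 1 ≤ n + 1), Finset.sum_range_succ',
    ← Finset.Ico_add_one_right_eq_Icc, Finset.sum_Ico_eq_sum_range]
  simp only [Nat.add_sub_cancel, Nat.sub_self, mul_zero, pow_zero, one_mul, mul_one,
    Nat.succ_sub_one, cGD_zero]
  have hsum : ∀ k ∈ Finset.range n,
      x ^ (2 * (n + 1 - (1 + k))) * cGD (1 + k) * u₀ ^ (2 * (1 + k))
        = x * (cGD (k + 1) * x ^ (2 * (n + 1 - (k + 1)) - 1) * u₀ ^ (2 * (k + 1))) := by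
    intro k hk
    have hk' := Finset.mem_range.mp hk
    have h2 : 1 + k = k + 1 := by omega
    have h1 : x ^ (2 * (n + 1 - (1 + k))) = x * x ^ (2 * (n + 1 - (k + 1)) - 1) := by
      rw [← pow_succ']
      congr 1
      omega
    rw [h1, h2]
    ring
  rw [Finset.sum_congr rfl hsum, ← Finset.mul_sum]
  have hx : x ^ (2 * (n + 1)) = x * x ^ (2 * (n + 1 - 0) - 1) := by
    have h0 : 2 * (n + 1 - 0) - 1 + 1 = 2 * (n + 1) := by omega
    rw [← h0, pow_succ]
    ring
  rw [hx]
  ring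

/-- The spectral curve of the Lax pair of the (2m,1) minimal model:
with t = −Σⱼ tⱼcⱼu₀^{2j} the leading-order string equation,
B₀² − (C₀ + t)² = (u₀² − x²)·S² where S = Σⱼ tⱼ Σ_{k<j} cₖ x^{2(j−k)−1} u₀^{2k}. -/
theorem spectral_curve_factorization (m : ℕ) (hm : 1 ≤ m) (t : ℕ → ℝ) (u₀ x : ℝ) :
    (∑ j ∈ Finset.Icc 1 m, t j *
        ∑ k ∈ Finset.range j, x ^ (2 * (j - k) - 1) * cGD k * u₀ ^ (2 * k + 1)) ^ 2
      - ((∑ j ∈ Finset.Icc 1 m, t j * (x ^ (2 * j) +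
            ∑ k ∈ Finset.Icc 1 j, x ^ (2 * (j - k)) * cGD k * u₀ ^ (2 * k)))
          + (- ∑ j ∈ Finset.Icc 1 m, t j * cGD j * u₀ ^ (2 * j))) ^ 2
      = (u₀ ^ 2 - x ^ 2) *
        (∑ j ∈ Finset.Icc 1 m, t j *
            ∑ k ∈ Finset.range j, cGD k * x ^ (2 * (j - k) - 1) * u₀ ^ (2 * k)) ^ 2 := by
  set S := ∑ j ∈ Finset.Icc 1 m, t j *
      ∑ k ∈ Finset.range j, cGD k * x ^ (2 * (j - k) - 1) * u₀ ^ (2 * k) with hS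
  have hB : (∑ j ∈ Finset.Icc 1 m, t j *
      ∑ k ∈ Finset.range j, x ^ (2 * (j - k) - 1) * cGD k * u₀ ^ (2 * k + 1)) = u₀ * S := by
    rw [hS, Finset.mul_sum]
    refine Finset.sum_congr rfl fun j _ => ?_
    rw [Finset.mul_sum, Finset.mul_sum, Finset.mul_sum]
    refine Finset.sum_congr rfl fun k _ => ?_
    ring
  have hC : (∑ j ∈ Finset.Icc 1 m, t j * (x ^ (2 * j) +
        ∑ k ∈ Finset.Icc 1 j, x ^ (2 * (j - k)) * cGD k * u₀ ^ (2 * k)))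
      + (- ∑ j ∈ Finset.Icc 1 m, t j * cGD j * u₀ ^ (2 * j)) = x * S := by
    rw [hS, Finset.mul_sum, ← sub_eq_add_neg, ← Finset.sum_sub_distrib]
    · refine Finset.sum_congr rfl fun j hj => ?_
      obtain ⟨n, rfl⟩ : ∃ n, j = n + 1 := ⟨j - 1, by have := (Finset.mem_Icc.mp hj).1; omega⟩
      have := inner_identity u₀ x n
      rw [this]
      ring
  rw [hB, hC]
  ring
end

section
/- Let m ≥ 1, t₁,…,t_m be real numbers, cₖ := (2k)!/(2^{2k}(k!)²), and let u : ℝ → ℝ be differentiable at t₀ and satisfy Σ_{j=1}^{m} tⱼ·cⱼ·u(t)^{2j} = −t for all t in a neighborhood of t₀. Fix a real x with x² < u(t₀)². Define Y(t) := √(u(t)² − x²) · Σ_{j=1}^{m} tⱼ·Σ_{k=0}^{j−1} cₖ·x^{2(j−k)−1}·u(t)^{2k}. Then Y is differentiable at t₀ with Y′(t₀) = −x/√(u(t₀)² − x²). -/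
open Finset

theorem cGD_succ (k : ℕ) : (2 * k + 2) * cGD (k + 1) = (2 * k + 1) * cGD k := by
  rw [cGD, cGD, show 2 * (k + 1) = 2 * k + 1 + 1 by ring, Nat.factorial_succ, Nat.factorial_succ,
    Nat.factorial_succ]
  push_cast
  field_simp
  ring

theorem mul_natCast_mul_pow_pred (w : ℝ) (n : ℕ) : w * ((n : ℝ) * w ^ (n - 1)) = n * w ^ n := by
  cases n with
  | zero => simp
  | succ n => rw [Nat.add_sub_cancel, pow_succ]; ring

theorem spectral_sum_identity (x w : ℝ) (j : ℕ) :
    w * ∑ k ∈ range j, cGD k * x ^ (2 * (j - k) - 1) * w ^ (2 * k) +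
      (w ^ 2 - x ^ 2) *
        ∑ k ∈ range j, cGD k * x ^ (2 * (j - k) - 1) * (((2 * k : ℕ) : ℝ) * w ^ (2 * k - 1)) =
      ((2 * j : ℕ) : ℝ) * cGD j * x * w ^ (2 * j - 1) := by
  set a : ℕ → ℝ := fun k => ((2 * k : ℕ) : ℝ) * cGD k * x ^ (2 * (j - k) + 1) * w ^ (2 * k - 1)
  have ha0 : a 0 = 0 := by simp [a]
  have haj : a j = ((2 * j : ℕ) : ℝ) * cGD j * x * w ^ (2 * j - 1) := by simp [a]
  rw [← haj, ← sub_zero (a j), ← ha0, ← sum_range_sub, mul_sum, mul_sum, ← sum_add_distrib]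
  refine sum_congr rfl fun k hk => ?_
  have hkj : k < j := mem_range.mp hk
  have hexp : 2 * (j - k) - 1 = 2 * (j - (k + 1)) + 1 := by omega
  have hw2 : w ^ 2 * (((2 * k : ℕ) : ℝ) * w ^ (2 * k - 1)) = 2 * k * w ^ (2 * k + 1) := by
    rw [pow_two, mul_assoc, mul_natCast_mul_pow_pred, pow_succ]; push_cast; ring
  have hx2 : x ^ 2 * x ^ (2 * (j - k) - 1) = x ^ (2 * (j - k) + 1) := by
    rw [← pow_add]; congr 1; omega
  simp only [a]
  rw [show 2 * (k + 1) - 1 = 2 * k + 1 by omega, ← hexp, ← hx2]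
  push_cast at hw2 ⊢
  linear_combination -x ^ (2 * (j - k) - 1) * w ^ (2 * k + 1) * cGD_succ k
    + cGD k * x ^ (2 * (j - k) - 1) * hw2

theorem hasDerivAt_spectral_sum (x w : ℝ) (j : ℕ) :
    HasDerivAt (fun w => ∑ k ∈ range j, cGD k * x ^ (2 * (j - k) - 1) * w ^ (2 * k))
      (∑ k ∈ range j, cGD k * x ^ (2 * (j - k) - 1) * (((2 * k : ℕ) : ℝ) * w ^ (2 * k - 1))) w :=
  HasDerivAt.fun_sum fun k _ => (hasDerivAt_pow (2 * k) w).const_mul _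

theorem hasDerivAt_string_poly (tc : ℕ → ℝ) (m : ℕ) (w : ℝ) :
    HasDerivAt (fun w => ∑ j ∈ Icc 1 m, tc j * cGD j * w ^ (2 * j))
      (∑ j ∈ Icc 1 m, tc j * cGD j * (((2 * j : ℕ) : ℝ) * w ^ (2 * j - 1))) w :=
  HasDerivAt.fun_sum fun j _ => (hasDerivAt_pow (2 * j) w).const_mul _

theorem hasDerivAt_spectral_curve (tc : ℕ → ℝ) (m : ℕ) {x w : ℝ} (hxw : x ^ 2 < w ^ 2) :
    HasDerivAt (fun w => √(w ^ 2 - x ^ 2) *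
        ∑ j ∈ Icc 1 m, tc j * ∑ k ∈ range j, cGD k * x ^ (2 * (j - k) - 1) * w ^ (2 * k))
      (x * (∑ j ∈ Icc 1 m, tc j * cGD j * (((2 * j : ℕ) : ℝ) * w ^ (2 * j - 1))) /
        √(w ^ 2 - x ^ 2)) w := by
  have hpos : 0 < w ^ 2 - x ^ 2 := by linarith
  have hsqrt : HasDerivAt (fun w => √(w ^ 2 - x ^ 2))
      (((2 : ℕ) : ℝ) * w ^ (2 - 1) / (2 * √(w ^ 2 - x ^ 2))) w :=
    ((hasDerivAt_pow 2 w).sub_const _).sqrt hpos.ne'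
  have hsum := HasDerivAt.fun_sum (u := Icc 1 m) fun j _ =>
    (hasDerivAt_spectral_sum x w j).const_mul (tc j)
  refine (hsqrt.fun_mul hsum).congr_deriv ?_
  have hs : √(w ^ 2 - x ^ 2) ≠ 0 := (Real.sqrt_pos.mpr hpos).ne'
  have key : x * ∑ j ∈ Icc 1 m, tc j * cGD j * (((2 * j : ℕ) : ℝ) * w ^ (2 * j - 1)) =
      w * ∑ j ∈ Icc 1 m, tc j * ∑ k ∈ range j, cGD k * x ^ (2 * (j - k) - 1) * w ^ (2 * k) +
      √(w ^ 2 - x ^ 2) ^ 2 * ∑ j ∈ Icc 1 m, tc j *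
        ∑ k ∈ range j, cGD k * x ^ (2 * (j - k) - 1) * (((2 * k : ℕ) : ℝ) * w ^ (2 * k - 1)) := by
    rw [Real.sq_sqrt hpos.le, mul_sum, mul_sum, mul_sum, ← sum_add_distrib]
    refine sum_congr rfl fun j _ => ?_
    linear_combination -tc j * spectral_sum_identity x w j
  rw [key]
  field_simp
  ring

theorem string_poly_deriv_mul_eq_neg_one {tc : ℕ → ℝ} {m : ℕ} {u : ℝ → ℝ} {t₀ d : ℝ}
    (hu : HasDerivAt u d t₀)
    (hstring : ∀ᶠ t in nhds t₀, ∑ j ∈ Icc 1 m, tc j * cGD j * u t ^ (2 * j) = -t) :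
    (∑ j ∈ Icc 1 m, tc j * cGD j * (((2 * j : ℕ) : ℝ) * u t₀ ^ (2 * j - 1))) * d = -1 :=
  ((hasDerivAt_string_poly tc m (u t₀)).comp t₀ hu).unique
    ((hasDerivAt_neg t₀).congr_of_eventuallyEq hstring)

theorem spectral_curve_t_derivative_general (m : ℕ) (tc : ℕ → ℝ) (u : ℝ → ℝ)
    (t₀ : ℝ) (hu : DifferentiableAt ℝ u t₀)
    (hstring : ∀ᶠ t in nhds t₀,
      ∑ j ∈ Finset.Icc 1 m, tc j * cGD j * u t ^ (2 * j) = -t)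
    (x : ℝ) (hx : x ^ 2 < u t₀ ^ 2) :
    HasDerivAt (fun t => Real.sqrt (u t ^ 2 - x ^ 2) *
        ∑ j ∈ Finset.Icc 1 m, tc j *
          ∑ k ∈ Finset.range j, cGD k * x ^ (2 * (j - k) - 1) * u t ^ (2 * k))
      (-x / Real.sqrt (u t₀ ^ 2 - x ^ 2)) t₀ := by
  have hY := (hasDerivAt_spectral_curve tc m hx).comp t₀ hu.hasDerivAt
  rw [div_mul_eq_mul_div, mul_assoc, string_poly_deriv_mul_eq_neg_one hu.hasDerivAt hstring,
    mul_neg_one] at hY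
  exact hY

/-- Derivative in t of the spectral curve ỹ(x,t) = √(u(t)²−x²)·Σⱼ tⱼ Σ_{k<j} cₖ
x^{2(j−k)−1} u(t)^{2k} of the (2m,1) minimal model: if u satisfies the leading-order
string equation Σⱼ tⱼcⱼu(t)^{2j} = −t near t₀ and x² < u(t₀)², then
∂ỹ/∂t (t₀) = −x/√(u(t₀)² − x²). -/
theorem spectral_curve_t_derivative (m : ℕ) (hm : 1 ≤ m) (tc : ℕ → ℝ) (u : ℝ → ℝ)
    (t₀ : ℝ) (hu : DifferentiableAt ℝ u t₀)
    (hstring : ∀ᶠ t in nhds t₀,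
      ∑ j ∈ Finset.Icc 1 m, tc j * cGD j * u t ^ (2 * j) = -t)
    (x : ℝ) (hx : x ^ 2 < u t₀ ^ 2) :
    HasDerivAt (fun t => Real.sqrt (u t ^ 2 - x ^ 2) *
        ∑ j ∈ Finset.Icc 1 m, tc j *
          ∑ k ∈ Finset.range j, cGD k * x ^ (2 * (j - k) - 1) * u t ^ (2 * k))
      (-x / Real.sqrt (u t₀ ^ 2 - x ^ 2)) t₀ :=
  spectral_curve_t_derivative_general m tc u t₀ hu hstring x hx
end

section
/- Let u₀ be a nonzero complex number and z₁, z₂ complex numbers with z₁, z₂ ∉ {0, 1, −1}, z₁ ≠ z₂ and z₁·z₂ ≠ 1. Set xᵢ := u₀·(zᵢ + 1/zᵢ)/2 for i = 1, 2, and r := ((z₁+1)(z₂−1))/((z₁−1)(z₂+1)). Then x₁ ≠ x₂ and (1/(4·(x₁−x₂)²))·(−2 + r + 1/r) = 4·z₁²·z₂²/(u₀²·(z₁²−1)·(z₂²−1)·(z₁z₂−1)²). -/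
/-- The leading two-point correlation function W₂⁽⁰⁾ of the (2m,1) minimal model under
the rational parametrization xᵢ = u₀(zᵢ + 1/zᵢ)/2: with
r = ((z₁+1)(z₂−1))/((z₁−1)(z₂+1)), one has x₁ ≠ x₂ and
(1/(4(x₁−x₂)²))(−2 + r + 1/r) = 4z₁²z₂²/(u₀²(z₁²−1)(z₂²−1)(z₁z₂−1)²). -/
theorem W2_rational_form (u₀ z₁ z₂ : ℂ) (hu : u₀ ≠ 0)
    (h10 : z₁ ≠ 0) (h11 : z₁ ≠ 1) (h1m : z₁ ≠ -1)
    (h20 : z₂ ≠ 0) (h21 : z₂ ≠ 1) (h2m : z₂ ≠ -1)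
    (hne : z₁ ≠ z₂) (hprod : z₁ * z₂ ≠ 1) :
    u₀ * (z₁ + 1 / z₁) / 2 ≠ u₀ * (z₂ + 1 / z₂) / 2 ∧
    (1 / (4 * (u₀ * (z₁ + 1 / z₁) / 2 - u₀ * (z₂ + 1 / z₂) / 2) ^ 2)) *
        (-2 + ((z₁ + 1) * (z₂ - 1)) / ((z₁ - 1) * (z₂ + 1))
            + ((z₁ - 1) * (z₂ + 1)) / ((z₁ + 1) * (z₂ - 1)))
      = 4 * z₁ ^ 2 * z₂ ^ 2 /
          (u₀ ^ 2 * (z₁ ^ 2 - 1) * (z₂ ^ 2 - 1) * (z₁ * z₂ - 1) ^ 2) := by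
  have hd : z₁ - z₂ ≠ 0 := sub_ne_zero.mpr hne
  have hp : z₁ * z₂ - 1 ≠ 0 := sub_ne_zero.mpr hprod
  have h1s : z₁ - 1 ≠ 0 := sub_ne_zero.mpr h11
  have h1p : z₁ + 1 ≠ 0 := by intro h; apply h1m; linear_combination h
  have h2s : z₂ - 1 ≠ 0 := sub_ne_zero.mpr h21
  have h2p : z₂ + 1 ≠ 0 := by intro h; apply h2m; linear_combination h
  have key : u₀ * (z₁ + 1 / z₁) / 2 - u₀ * (z₂ + 1 / z₂) / 2
      = u₀ * (z₁ - z₂) * (z₁ * z₂ - 1) / (2 * z₁ * z₂) := by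
    field_simp; ring
  refine ⟨fun h => ?_, ?_⟩
  · rw [← sub_eq_zero] at h
    rw [key, div_eq_zero_iff] at h
    rcases h with h | h
    · exact (mul_ne_zero (mul_ne_zero hu hd) hp) h
    · exact (mul_ne_zero (mul_ne_zero two_ne_zero h10) h20) h
  · have key2 : 1 / (4 * (u₀ * (z₁ + 1 / z₁) / 2 - u₀ * (z₂ + 1 / z₂) / 2) ^ 2)
        = (z₁ * z₂) ^ 2 / (u₀ ^ 2 * ((z₁ - z₂) ^ 2 * (z₁ * z₂ - 1) ^ 2)) := by
      rw [key]; field_simp; ring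
    have key3 : -2 + ((z₁ + 1) * (z₂ - 1)) / ((z₁ - 1) * (z₂ + 1))
            + ((z₁ - 1) * (z₂ + 1)) / ((z₁ + 1) * (z₂ - 1))
        = 4 * (z₁ - z₂) ^ 2 / ((z₁ - 1) * (z₂ + 1) * ((z₁ + 1) * (z₂ - 1))) := by
      field_simp; ring
    rw [key2, key3, div_mul_div_comm, div_eq_div_iff]
    · ring
    · exact mul_ne_zero (mul_ne_zero (pow_ne_zero 2 hu)
        (mul_ne_zero (pow_ne_zero 2 hd) (pow_ne_zero 2 hp)))
        (mul_ne_zero (mul_ne_zero h1s h2p) (mul_ne_zero h1p h2s))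
    · refine mul_ne_zero (mul_ne_zero (mul_ne_zero (pow_ne_zero 2 hu) ?_) ?_) (pow_ne_zero 2 hp)
      · intro h; rcases mul_eq_zero.mp (by linear_combination h : (z₁-1)*(z₁+1) = 0) with h' | h'
        · exact h1s h'
        · exact h1p h'
      · intro h; rcases mul_eq_zero.mp (by linear_combination h : (z₂-1)*(z₂+1) = 0) with h' | h'
        · exact h2s h'
        · exact h2p h'
end

section
/- Let b, ε be real numbers and m ≥ 1 an integer. Let g be a formal power series in one variable w over ℝ with constant coefficient 1 satisfying g² = 1 − b²·w². Then for every integer j with 0 ≤ j ≤ 2m+1, the coefficient of w^{2m+1−j} in the power series (1 − bεw)^{2m}·g equals C(2m, j−1)·(−bε)^{2m+1−j} + Σ_{n=1}^{⌊(2m+1−j)/2⌋} C(2m, 2n+j−1)·(−1)^j·((2n−2)!/(n!(n−1)!·2^{2n−1}))·ε^{2(m−n)+1−j}·b^{2m+1−j}, where C(2m, −1) is interpreted as 0. -/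
/-!
The Catalan series `c = 1 + X c²` gives `(1 - 2Xc)² = 1 - 4X`, so the square root of
`1 - b²w²` with constant term `1` is `1 - 2Xc` evaluated at `X = b²w²/4`: its coefficient of
`w^{2n}` is `-C_{n-1} b^{2n} / 2^{2n-1}`, where `C_{n-1} = (2n-2)!/(n!(n-1)!)`, and its odd
coefficients vanish. Multiplying by the binomial expansion of `(1 - bεw)^{2m}` and pairing
`w^{2n}` with `w^{2m+1-j-2n}` gives the formula.
-/

open PowerSeries Finset

theorem cast_catalan_eq_factorial_div {K : Type*} [Field K] [CharZero K] (n : ℕ) :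
    (catalan n : K) = (2 * n).factorial / ((n + 1).factorial * n.factorial) := by
  have h := congrArg (Nat.cast : ℕ → K) (succ_mul_catalan_eq_centralBinom n)
  rw [Nat.centralBinom_eq_two_mul_choose, Nat.cast_choose K (by omega),
    show 2 * n - n = n by omega] at h
  push_cast at h
  rw [Nat.factorial_succ]
  push_cast
  field_simp
  linear_combination h

namespace PowerSeries

variable {R : Type*} [CommRing R]

theorem coeff_one_sub_C_mul_X_pow (a : R) (M k : ℕ) :
    coeff k ((1 - C a * X) ^ M) = M.choose k * (-a) ^ k := by
  have h : (1 - C a * X : R⟦X⟧) = rescale (-a) (Polynomial.X + 1 : Polynomial R) := by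
    simp [rescale_X, sub_eq_add_neg, add_comm]
  rw [h, ← map_pow, coeff_rescale, ← Polynomial.coe_pow, Polynomial.coeff_coe,
    Polynomial.coeff_X_add_one_pow, mul_comm]

theorem coeff_mul_expand (p : ℕ) (hp : p ≠ 0) (f φ : R⟦X⟧) (N : ℕ) :
    coeff N (f * expand p hp φ) = ∑ n ∈ range (N / p + 1), coeff (N - p * n) f * coeff n φ := by
  rw [mul_comm, coeff_mul,
    Nat.sum_antidiagonal_eq_sum_range_succ fun i k => coeff i (expand p hp φ) * coeff k f]
  have hmap : (range (N / p + 1)).map ⟨(p * ·), mul_right_injective₀ hp⟩ ⊆ range (N + 1) := by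
    intro i hi
    simp only [mem_map, mem_range, Function.Embedding.coeFn_mk] at hi ⊢
    obtain ⟨n, hn, rfl⟩ := hi
    exact Nat.lt_succ_of_le
      ((Nat.mul_le_mul_left p (Nat.lt_succ_iff.1 hn)).trans (Nat.mul_div_le N p))
  rw [← sum_subset hmap fun i hiN hi => ?_, sum_map]
  · refine sum_congr rfl fun n _ => ?_
    simp [coeff_expand_mul, mul_comm]
  · refine mul_eq_zero_of_left (coeff_expand_of_not_dvd p hp φ ?_) _
    rintro ⟨n, rfl⟩
    refine hi (mem_map_of_mem _ (mem_range.2 (Nat.lt_succ_of_le ?_)))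
    rw [Nat.le_div_iff_mul_le hp.bot_lt, mul_comm]
    exact Nat.lt_succ_iff.1 (mem_range.1 hiN)

theorem sq_one_sub_two_mul_X_mul_map_catalanSeries :
    (1 - 2 * X * catalanSeries.map (Nat.castRingHom R)) ^ 2 = 1 - 4 * X := by
  have h := congrArg (map (Nat.castRingHom R)) catalanSeries_sq_mul_X_add_one
  simp only [map_add, map_mul, map_pow, map_X, map_one] at h
  linear_combination (4 * X) * h

theorem coeff_succ_one_sub_two_mul_X_mul_map_catalanSeries (n : ℕ) :
    coeff (n + 1) (1 - 2 * X * catalanSeries.map (Nat.castRingHom R) : R⟦X⟧) =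
      -2 * (catalan n : R) := by
  rw [mul_comm 2, mul_assoc, ← map_ofNat C 2]
  simp [coeff_one, coeff_succ_X_mul, catalanSeries_coeff]

theorem eq_of_sq_eq_sq_of_constantCoeff_eq [NoZeroDivisors R] [NeZero (2 : R)] {f g : R⟦X⟧}
    (h : f ^ 2 = g ^ 2) (h₀ : constantCoeff f = constantCoeff g) (hf : constantCoeff f ≠ 0) :
    f = g := by
  refine (sq_eq_sq_iff_eq_or_eq_neg.1 h).resolve_right fun hneg => hf ?_
  have h₂ := congrArg constantCoeff hneg
  rw [map_neg, ← h₀] at h₂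
  exact (mul_eq_zero.1 (by linear_combination h₂ : 2 * constantCoeff f = 0)).resolve_left
    two_ne_zero

variable {K : Type*} [Field K] [NeZero (2 : K)]

theorem eq_expand_rescale_of_sq_eq_one_sub_C_mul_X_sq (b : K) {g : K⟦X⟧}
    (hg₀ : constantCoeff g = 1) (hg : g ^ 2 = 1 - C (b ^ 2) * X ^ 2) :
    g = expand 2 two_ne_zero
      (rescale (b ^ 2 / 4) (1 - 2 * X * catalanSeries.map (Nat.castRingHom K))) := by
  refine eq_of_sq_eq_sq_of_constantCoeff_eq ?_ ?_ (by simp [hg₀])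
  · rw [hg, ← map_pow, ← map_pow, sq_one_sub_two_mul_X_mul_map_catalanSeries]
    have h4 : (4 : K) ≠ 0 := by
      rw [show (4 : K) = 2 * 2 by norm_num]
      exact mul_ne_zero two_ne_zero two_ne_zero
    simp only [map_sub, map_one, map_mul, map_ofNat, rescale_X, expand_X, expand_C]
    rw [← map_ofNat C 4, ← mul_assoc, ← map_mul, mul_div_cancel₀ _ h4]
  · simp [hg₀]

theorem coeff_one_sub_C_mul_X_pow_mul_of_sq_eq (a b : K) (M N : ℕ) {g : K⟦X⟧}
    (hg₀ : constantCoeff g = 1) (hg : g ^ 2 = 1 - C (b ^ 2) * X ^ 2) :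
    coeff N ((1 - C a * X) ^ M * g) =
      M.choose N * (-a) ^ N - ∑ n ∈ Icc 1 (N / 2), M.choose (N - 2 * n) * (-a) ^ (N - 2 * n) *
        (catalan (n - 1) / 2 ^ (2 * n - 1) * b ^ (2 * n)) := by
  rw [eq_expand_rescale_of_sq_eq_one_sub_C_mul_X_sq b hg₀ hg, coeff_mul_expand, range_eq_Ico,
    sum_eq_sum_Ico_succ_bot (by positivity), Ico_add_one_right_eq_Icc,
    sub_eq_add_neg _ (∑ n ∈ Icc 1 (N / 2), _), ← sum_neg_distrib]
  congr 1
  · simp [coeff_one_sub_C_mul_X_pow]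
  · refine sum_congr rfl fun n hn => ?_
    obtain ⟨t, rfl⟩ : ∃ t, n = t + 1 := ⟨n - 1, by grind⟩
    rw [coeff_rescale, coeff_succ_one_sub_two_mul_X_mul_map_catalanSeries,
      coeff_one_sub_C_mul_X_pow, Nat.add_sub_cancel, show 2 * (t + 1) - 1 = 2 * t + 1 by omega,
      show (4 : K) = 2 ^ 2 by norm_num, div_pow, ← pow_mul, ← pow_mul]
    field_simp
    ring

end PowerSeries

theorem critical_potential_coefficients_general (b ε : ℝ) (m : ℕ)
    (g : PowerSeries ℝ) (hg0 : constantCoeff g = 1)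
    (hg : g ^ 2 = 1 - PowerSeries.C (b ^ 2) * PowerSeries.X ^ 2)
    (j : ℕ) (hj : j ≤ 2 * m + 1) :
    coeff (2 * m + 1 - j)
        ((1 - PowerSeries.C (b * ε) * PowerSeries.X) ^ (2 * m) * g)
      = (if j = 0 then 0 else
          (Nat.choose (2 * m) (j - 1) : ℝ) * (-(b * ε)) ^ (2 * m + 1 - j))
        + ∑ n ∈ Finset.Icc 1 ((2 * m + 1 - j) / 2),
            (Nat.choose (2 * m) (2 * n + j - 1) : ℝ) * (-1) ^ j *
              ((Nat.factorial (2 * n - 2) : ℝ) /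
                ((Nat.factorial n : ℝ) * (Nat.factorial (n - 1) : ℝ) * 2 ^ (2 * n - 1))) *
              ε ^ (2 * (m - n) + 1 - j) * b ^ (2 * m + 1 - j) := by
  rw [coeff_one_sub_C_mul_X_pow_mul_of_sq_eq _ b _ _ hg0 hg,
    sub_eq_add_neg _ (∑ n ∈ Icc 1 _, _), ← sum_neg_distrib]
  congr 1
  · rcases j with _ | j
    · simp
    · rw [if_neg j.succ_ne_zero, Nat.add_sub_cancel,
        Nat.choose_symm_of_eq_add (show 2 * m = 2 * m + 1 - (j + 1) + j by omega)]
  · refine sum_congr rfl fun n hn => ?_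
    obtain ⟨t, rfl⟩ : ∃ t, n = t + 1 := ⟨n - 1, by grind⟩
    obtain ⟨e, he⟩ : ∃ e, 2 * m + 1 - j = 2 * (t + 1) + e :=
      ⟨2 * m + 1 - j - 2 * (t + 1), by grind⟩
    have hsign : (-1 : ℝ) ^ j = -(-1) ^ e := by
      rw [neg_eq_neg_one_mul ((-1 : ℝ) ^ e), ← pow_succ', neg_one_pow_eq_pow_mod_two,
        neg_one_pow_eq_pow_mod_two (n := e + 1), show j % 2 = (e + 1) % 2 by omega]
    rw [he, Nat.add_sub_cancel_left, show 2 * (m - (t + 1)) + 1 - j = e by omega,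
      Nat.choose_symm_of_eq_add (show 2 * m = e + (2 * (t + 1) + j - 1) by omega),
      Nat.add_sub_cancel, show 2 * (t + 1) - 2 = 2 * t by omega, cast_catalan_eq_factorial_div,
      hsign, neg_pow (b * ε), mul_pow, pow_add]
    ring

/-- Explicit formula for the critical potential V′_c(x) = Pol((x−bε)^{2m}√(x²−b²)):
writing w = 1/x and letting g be the power series with constant coefficient 1 and
g² = 1 − b²w², the coefficient of w^{2m+1−j} in (1 − bεw)^{2m}·g is
C(2m,j−1)(−bε)^{2m+1−j} + Σ_{n=1}^{⌊(2m+1−j)/2⌋} C(2m,2n+j−1)(−1)ʲ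
((2n−2)!/(n!(n−1)!2^{2n−1})) ε^{2(m−n)+1−j} b^{2m+1−j}, with C(2m,−1) := 0. -/
theorem critical_potential_coefficients (b ε : ℝ) (m : ℕ) (hm : 1 ≤ m)
    (g : PowerSeries ℝ) (hg0 : constantCoeff g = 1)
    (hg : g ^ 2 = 1 - PowerSeries.C (b ^ 2) * PowerSeries.X ^ 2)
    (j : ℕ) (hj : j ≤ 2 * m + 1) :
    coeff (2 * m + 1 - j)
        ((1 - PowerSeries.C (b * ε) * PowerSeries.X) ^ (2 * m) * g)
      = (if j = 0 then 0 else
          (Nat.choose (2 * m) (j - 1) : ℝ) * (-(b * ε)) ^ (2 * m + 1 - j))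
        + ∑ n ∈ Finset.Icc 1 ((2 * m + 1 - j) / 2),
            (Nat.choose (2 * m) (2 * n + j - 1) : ℝ) * (-1) ^ j *
              ((Nat.factorial (2 * n - 2) : ℝ) /
                ((Nat.factorial n : ℝ) * (Nat.factorial (n - 1) : ℝ) * 2 ^ (2 * n - 1))) *
              ε ^ (2 * (m - n) + 1 - j) * b ^ (2 * m + 1 - j) :=
  critical_potential_coefficients_general b ε m g hg0 hg j hj
end

section
/- Let b, ε be real numbers and m ≥ 1 an integer. Let g be a formal power series in one variable w over ℝ with constant coefficient 1 satisfying g² = 1 − b²·w². Then the coefficient of w^{2m+2} in the power series (1 − bεw)^{2m}·g equals −2·T_c, where T_c := (b^{2m+2}/2)·Σ_{n=1}^{m+1} ε^{2m−2n+2}·(2m)!/(n!·(2m−2n+2)!·(n−1)!·2^{2n−1}). -/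
/-!
Differentiating `g ^ 2 = 1 - a X ^ 2` gives `(1 - a X ^ 2) g' = -a X g`, i.e. the recurrence
`(n + 2) g_{n+2} = a (n - 1) g_n` with `g_1 = 0`. Hence `g` is even, and from `g_0 = 1`
one gets `g_{2k+2} = -a^{k+1} (2k)! / (k! (k+1)! 2^{2k+1})`. In the coefficient of `X^{2m+2}` of
`(1 - bεX)^{2m} g` only the even coefficients `g_{2n}`, `1 ≤ n ≤ m + 1`, meet a nonzero binomial
coefficient, and the product for index `2n` is the `n`-th summand of the formula.
-/

open PowerSeries Finset

theorem Finset.sum_range_two_mul_add_one_of_odd_eq_zero {M : Type*} [AddCommMonoid M]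
    (f : ℕ → M) (hf : ∀ k, f (2 * k + 1) = 0) (N : ℕ) :
    ∑ j ∈ range (2 * N + 1), f j = ∑ n ∈ range (N + 1), f (2 * n) := by
  induction N with
  | zero => simp
  | succ N ih =>
    rw [show 2 * (N + 1) + 1 = 2 * N + 1 + 1 + 1 by ring, sum_range_succ, sum_range_succ, ih, hf,
      add_zero, sum_range_succ _ (N + 1), show 2 * N + 1 + 1 = 2 * (N + 1) by ring]

namespace PowerSeries

section SquareRoot

variable {K : Type*} [Field K] [CharZero K] {a : K} {g : K⟦X⟧}

theorem mul_derivative_eq_of_sq_eq (hg : g ^ 2 = 1 - C a * X ^ 2) :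
    g * d⁄dX K g = -(C a * X) := by
  have h := congrArg (d⁄dX K) hg
  rw [map_sub, Derivation.map_one_eq_zero, Derivation.leibniz, derivative_C,
    Derivation.leibniz_pow, Derivation.leibniz_pow, derivative_X] at h
  have two_ne_zero : (2 : K⟦X⟧) ≠ 0 := fun h2 ↦ by
    simpa [map_ofNat] using congrArg constantCoeff h2
  refine mul_left_cancel₀ two_ne_zero ?_
  simp only [nsmul_eq_mul, smul_eq_mul] at h
  linear_combination h

theorem one_sub_mul_derivative_eq_of_sq_eq (hg : g ^ 2 = 1 - C a * X ^ 2) :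
    (1 - C a * X ^ 2) * d⁄dX K g = -(C a * X * g) := by
  rw [← hg, sq, mul_assoc, mul_derivative_eq_of_sq_eq hg]
  ring

theorem coeff_one_eq_zero_of_sq_eq (hg : g ^ 2 = 1 - C a * X ^ 2) : coeff 1 g = 0 := by
  simpa [sub_mul, mul_assoc, coeff_X_pow_mul', coeff_zero_X_mul, ← coeff_zero_eq_constantCoeff,
      coeff_derivative]
    using congrArg (coeff 0) (one_sub_mul_derivative_eq_of_sq_eq hg)

theorem coeff_add_two_of_sq_eq (hg : g ^ 2 = 1 - C a * X ^ 2) (n : ℕ) :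
    (n + 2 : K) * coeff (n + 2) g = a * (n - 1) * coeff n g := by
  have h := congrArg (coeff (n + 1)) (one_sub_mul_derivative_eq_of_sq_eq hg)
  simp only [sub_mul, one_mul, mul_assoc, map_sub, map_neg, coeff_C_mul, coeff_X_pow_mul',
    coeff_succ_X_mul, coeff_derivative] at h
  rcases n with _ | n
  · rw [if_neg (by omega)] at h
    push_cast at h ⊢
    linear_combination h
  · rw [if_pos (by omega), show n + 1 + 1 - 2 = n by omega] at h
    push_cast at h ⊢
    linear_combination h

theorem coeff_two_mul_add_one_eq_zero_of_sq_eq (hg : g ^ 2 = 1 - C a * X ^ 2) (k : ℕ) :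
    coeff (2 * k + 1) g = 0 := by
  induction k with
  | zero => exact coeff_one_eq_zero_of_sq_eq hg
  | succ k ih =>
    have h := coeff_add_two_of_sq_eq hg (2 * k + 1)
    rw [ih, mul_zero, mul_eq_zero] at h
    exact h.resolve_left (by exact_mod_cast (by omega : 2 * k + 1 + 2 ≠ 0))

theorem coeff_two_mul_add_two_of_sq_eq (hg0 : constantCoeff g = 1)
    (hg : g ^ 2 = 1 - C a * X ^ 2) (k : ℕ) :
    coeff (2 * k + 2) g =
      -(a ^ (k + 1) * (2 * k).factorial / (k.factorial * (k + 1).factorial * 2 ^ (2 * k + 1))) := by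
  induction k with
  | zero =>
    have h := coeff_add_two_of_sq_eq hg 0
    rw [coeff_zero_eq_constantCoeff, hg0] at h
    simp only [mul_zero, zero_add, Nat.factorial_zero, Nat.factorial_one, Nat.cast_one]
    linear_combination h / 2
  | succ k ih =>
    have h := coeff_add_two_of_sq_eq hg (2 * k + 2)
    rw [ih] at h
    rw [show 2 * (k + 1) + 2 = 2 * k + 2 + 2 by ring]
    refine mul_left_cancel₀ (by exact_mod_cast (by omega : 2 * k + 2 + 2 ≠ 0)) (h.trans ?_)
    simp only [Nat.factorial_succ, show 2 * (k + 1) = 2 * k + 1 + 1 by ring]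
    have hk2 : (k : K) + 1 + 1 ≠ 0 := by exact_mod_cast (k + 1).succ_ne_zero
    have hkf : (k.factorial : K) ≠ 0 := by exact_mod_cast k.factorial_ne_zero
    push_cast
    field_simp
    ring

end SquareRoot

theorem coeff_one_sub_C_mul_X_pow_s16 {R : Type*} [CommRing R] (c : R) (N j : ℕ) :
    coeff j ((1 - C c * X) ^ N) = (-c) ^ j * N.choose j := by
  have h : (1 - C c * X) ^ N = rescale (-c) (((1 + Polynomial.X) ^ N : Polynomial R) : R⟦X⟧) := by
    simp [rescale_X, sub_eq_add_neg]
  rw [h, coeff_rescale, Polynomial.coeff_coe, Polynomial.coeff_one_add_X_pow]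

theorem coeff_two_mul_mul_of_coeff_odd_eq_zero {R : Type*} [CommSemiring R] {f g : R⟦X⟧}
    (hg : ∀ k, coeff (2 * k + 1) g = 0) (N : ℕ) :
    coeff (2 * N) (f * g) = ∑ n ∈ range (N + 1), coeff (2 * N - 2 * n) f * coeff (2 * n) g := by
  rw [mul_comm f, coeff_mul,
    Nat.sum_antidiagonal_eq_sum_range_succ (fun i j ↦ coeff i g * coeff j f), Nat.succ_eq_add_one,
    Finset.sum_range_two_mul_add_one_of_odd_eq_zero _ (by simp [hg])]
  simp only [mul_comm]

end PowerSeries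

theorem critical_temperature_general (b ε : ℝ) (m : ℕ)
    (g : PowerSeries ℝ) (hg0 : constantCoeff g = 1)
    (hg : g ^ 2 = 1 - PowerSeries.C (b ^ 2) * PowerSeries.X ^ 2) :
    coeff (2 * m + 2)
        ((1 - PowerSeries.C (b * ε) * PowerSeries.X) ^ (2 * m) * g)
      = -2 * (b ^ (2 * m + 2) / 2 *
          ∑ n ∈ Finset.Icc 1 (m + 1),
            ε ^ (2 * m + 2 - 2 * n) * (Nat.factorial (2 * m) : ℝ) /
              ((Nat.factorial n : ℝ) * (Nat.factorial (2 * m + 2 - 2 * n) : ℝ) *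
                (Nat.factorial (n - 1) : ℝ) * 2 ^ (2 * n - 1))) := by
  conv_lhs => rw [show 2 * m + 2 = 2 * (m + 1) by ring]
  rw [coeff_two_mul_mul_of_coeff_odd_eq_zero (coeff_two_mul_add_one_eq_zero_of_sq_eq hg),
    sum_range_succ', coeff_one_sub_C_mul_X_pow_s16, Nat.choose_eq_zero_of_lt (by omega), Nat.cast_zero,
    mul_zero, zero_mul, add_zero, ← Ico_add_one_right_eq_Icc, sum_Ico_eq_sum_range,
    add_tsub_cancel_right, mul_sum, mul_sum]
  refine sum_congr rfl fun n hn ↦ ?_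
  obtain ⟨k, rfl⟩ := Nat.exists_eq_add_of_le (mem_range_succ_iff.1 hn)
  rw [show 2 * (n + k + 1) - 2 * (n + 1) = 2 * k by omega,
    show 2 * (n + k) + 2 - 2 * (1 + n) = 2 * k by omega, show 2 * (1 + n) - 1 = 2 * n + 1 by omega,
    show 1 + n - 1 = n by omega, add_comm 1 n, coeff_one_sub_C_mul_X_pow_s16,
    show 2 * (n + 1) = 2 * n + 2 by ring, coeff_two_mul_add_two_of_sq_eq hg0 hg,
    (even_two_mul k).neg_pow,
    Nat.cast_choose ℝ (by omega : 2 * k ≤ 2 * (n + k)), show 2 * (n + k) - 2 * k = 2 * n by omega,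
    mul_pow, ← pow_mul]
  field_simp
  ring

/-- The residue at infinity of (x−bε)^{2m}√(x²−b²) determines the critical
temperature: writing w = 1/x and letting g be the power series with constant
coefficient 1 and g² = 1 − b²w², the coefficient of w^{2m+2} in (1 − bεw)^{2m}·g
equals −2·T_c with T_c = (b^{2m+2}/2)·Σ_{n=1}^{m+1}
ε^{2m−2n+2}(2m)!/(n!(2m−2n+2)!(n−1)!2^{2n−1}). -/
theorem critical_temperature (b ε : ℝ) (m : ℕ) (hm : 1 ≤ m)
    (g : PowerSeries ℝ) (hg0 : constantCoeff g = 1)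
    (hg : g ^ 2 = 1 - PowerSeries.C (b ^ 2) * PowerSeries.X ^ 2) :
    coeff (2 * m + 2)
        ((1 - PowerSeries.C (b * ε) * PowerSeries.X) ^ (2 * m) * g)
      = -2 * (b ^ (2 * m + 2) / 2 *
          ∑ n ∈ Finset.Icc 1 (m + 1),
            ε ^ (2 * m + 2 - 2 * n) * (Nat.factorial (2 * m) : ℝ) /
              ((Nat.factorial n : ℝ) * (Nat.factorial (2 * m + 2 - 2 * n) : ℝ) *
                (Nat.factorial (n - 1) : ℝ) * 2 ^ (2 * n - 1))) :=
  critical_temperature_general b ε m g hg0 hg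
end
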